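/- arXiv:1409.0446 — 6 statements merged into one kernel-verified Lean document; each statement's English description precedes it below -/
import Mathlib

section
/- For any primes p and q and any positive integer n, the integer complexity of p^n satisfies S_q(p^n) ≥ ‖p^n‖ − n·q·log_q(p), where S_q(m) is the sum of digits of m in base q and ‖m‖ is the integer complexity (minimum number of 1's needed to write m using 1's, addition, and multiplication). -/
/-- `IsExpr n m` : the positive integer `n` is representable by an arithmetic
expression in basis `{1, +, ·}` containing exactly `m` ones. -/
inductive IsExpr : ℕ → ℕ → Prop
  | one : IsExpr 1 1
  | add {a b m n : ℕ} : IsExpr a m → IsExpr b n → IsExpr (a + b) (m + n)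
  | mul {a b m n : ℕ} : IsExpr a m → IsExpr b n → IsExpr (a * b) (m + n)

/-- Integer complexity `‖n‖`: the minimum number of 1's needed to represent `n`
using 1's, addition and multiplication. -/
noncomputable def cpx (n : ℕ) : ℕ := sInf {m | IsExpr n m}

lemma isExpr_self (k : ℕ) (hk : 1 ≤ k) : IsExpr k k := by
  induction k with
  | zero => omega
  | succ k ih =>
    rcases Nat.eq_or_lt_of_le hk with h | h
    · simpa [← h] using IsExpr.one
    · exact IsExpr.add (ih (by omega)) IsExpr.one

lemma key (q : ℕ) (hq : 2 ≤ q) : ∀ N, 1 ≤ N →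
    ∃ m, IsExpr N m ∧ m ≤ q * Nat.log q N + (Nat.digits q N).sum := by
  intro N
  induction N using Nat.strong_induction_on with
  | _ N ih =>
    intro hN
    by_cases h : N < q
    · refine ⟨N, isExpr_self N hN, ?_⟩
      rw [Nat.digits_def' hq hN, Nat.mod_eq_of_lt h, Nat.div_eq_of_lt h]
      simp
    · push_neg at h
      have hdivpos : 1 ≤ N / q := (Nat.one_le_div_iff (by omega)).2 h
      have hdivlt : N / q < N := Nat.div_lt_self (by omega) hq
      obtain ⟨m', hm', hb⟩ := ih (N / q) hdivlt hdivpos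
      have hlogpos : 0 < Nat.log q N := Nat.log_pos (by omega) h
      have hlog : Nat.log q N = Nat.log q (N / q) + 1 := by
        have := Nat.log_div_base q N
        omega
      have hdig : (Nat.digits q N).sum = N % q + (Nat.digits q (N / q)).sum := by
        rw [Nat.digits_def' hq hN]; simp
      have hmul : IsExpr (q * (N / q)) (q + m') :=
        IsExpr.mul (isExpr_self q (by omega)) hm'
      by_cases hr : N % q = 0
      · refine ⟨q + m', ?_, ?_⟩
        · have : q * (N / q) = N := Nat.mul_div_cancel' (Nat.dvd_of_mod_eq_zero hr)
          rwa [this] at hmul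
        · rw [hlog, hdig, hr]; nlinarith
      · refine ⟨(q + m') + N % q, ?_, ?_⟩
        · have := IsExpr.add hmul (isExpr_self (N % q) (by omega))
          rwa [Nat.div_add_mod] at this
        · rw [hlog, hdig]; nlinarith

/-- for primes `p, q` and `n > 0`,
`S_q(p^n) ≥ ‖p^n‖ − n·q·log_q p`. -/
theorem stmt0 (p q n : ℕ) (hp : p.Prime) (hq : q.Prime) (hn : 0 < n) :
    ((Nat.digits q (p ^ n)).sum : ℝ) ≥
      (cpx (p ^ n) : ℝ) - n * q * Real.logb q p := by
  set N := p ^ n with hN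
  have hq2 : 2 ≤ q := hq.two_le
  have hNpos : 1 ≤ N := Nat.one_le_pow _ _ hp.pos
  obtain ⟨m, hm, hb⟩ := key q hq2 N hNpos
  have hcpx : cpx N ≤ q * Nat.log q N + (Nat.digits q N).sum :=
    le_trans (Nat.sInf_le hm) hb
  set L := Nat.log q N with hL
  -- L ≤ n * logb q p
  have hq1 : (1:ℝ) < q := by exact_mod_cast hq2
  have hpow : (q:ℝ) ^ L ≤ (N:ℝ) := by
    exact_mod_cast Nat.pow_log_le_self q (by omega)
  have hLle : (L:ℝ) ≤ n * Real.logb q p := by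
    have h1 : Real.logb q ((q:ℝ)^L) ≤ Real.logb q N :=
      Real.logb_le_logb_of_le hq1 (by positivity) hpow
    rw [Real.logb_pow, Real.logb_self_eq_one hq1] at h1
    have h2 : Real.logb q (N:ℝ) = n * Real.logb q p := by
      rw [hN]; push_cast; rw [Real.logb_pow]
    simpa [h2] using h1
  have hcpxR : (cpx N : ℝ) ≤ q * L + (Nat.digits q N).sum := by
    exact_mod_cast hcpx
  have : (q:ℝ) * L ≤ n * q * Real.logb q p := by
    have hq0 : (0:ℝ) ≤ q := by positivity
    nlinarith
  linarith
end

section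
/- If ‖2^n‖ = 2n holds for all n ≥ 1, then for all n > 0 the base-3 digit sum of 2^n satisfies S_3(2^n) > 0.107·n. -/
/-!
Writing `m` in base `b` by Horner's scheme, `m = (⋯(d₀ · b + d₁) · b + ⋯) · b + d_L`, and spending
`b` ones on each factor `b` and `dᵢ` ones on each digit gives `‖m‖ ≤ b · ⌊log_b m⌋ + S_b(m)`.
For `m = 2ⁿ` and `b = 3`, the hypothesis `‖2ⁿ‖ = 2n` turns this into
`S₃(2ⁿ) ≥ 2n - 3⌊log₃ 2ⁿ⌋`, and `2³⁰⁰⁰ < 3¹⁸⁹³` gives `3⌊log₃ 2ⁿ⌋ < 1.893 n`.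
-/

theorem IsExpr.self : ∀ {d : ℕ}, 0 < d → IsExpr d d
  | 1, _ => .one
  | d + 1 + 1, _ => .add (IsExpr.self d.succ_pos) .one

theorem cpx_le {n k : ℕ} (h : IsExpr n k) : cpx n ≤ k :=
  Nat.sInf_le h

theorem exists_isExpr_le_mul_log_add_digits_sum {b : ℕ} (hb : 2 ≤ b) {m : ℕ} (hm : 0 < m) :
    ∃ k, IsExpr m k ∧ k ≤ b * Nat.log b m + (Nat.digits b m).sum := by
  induction m using Nat.strong_induction_on with
  | _ m ih =>
  rcases lt_or_ge m b with hmb | hbm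
  · refine ⟨m, IsExpr.self hm, ?_⟩
    simp [Nat.log_of_lt hmb, Nat.digits_of_lt b m hm.ne' hmb]
  obtain ⟨k, hk, hk_le⟩ := ih (m / b) (Nat.div_lt_self hm hb) (Nat.div_pos hbm (by omega))
  have hquot : IsExpr (b * (m / b)) (b + k) := .mul (IsExpr.self (by omega)) hk
  have hlog : Nat.log b m = Nat.log b (m / b) + 1 := Nat.log_of_one_lt_of_le hb hbm
  have hsum : (Nat.digits b m).sum = m % b + (Nat.digits b (m / b)).sum := by
    rw [Nat.digits_def' hb hm, List.sum_cons]
  have hdiv := Nat.div_add_mod m b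
  rcases Nat.eq_zero_or_pos (m % b) with hr | hr
  · refine ⟨b + k, ?_, ?_⟩
    · rw [hr, add_zero] at hdiv
      rwa [hdiv] at hquot
    · rw [hlog, hsum]; linarith
  · refine ⟨b + k + m % b, ?_, ?_⟩
    · have := IsExpr.add hquot (IsExpr.self hr)
      rwa [hdiv] at this
    · rw [hlog, hsum]; linarith

theorem cpx_le_mul_log_add_digits_sum {b : ℕ} (hb : 2 ≤ b) {m : ℕ} (hm : 0 < m) :
    cpx m ≤ b * Nat.log b m + (Nat.digits b m).sum := by
  obtain ⟨k, hk, hk_le⟩ := exists_isExpr_le_mul_log_add_digits_sum hb hm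
  exact (cpx_le hk).trans hk_le

theorem mul_log_pow_lt {a b p q n : ℕ} (ha : 0 < a) (hb : 2 ≤ b) (hpq : a ^ p < b ^ q)
    (hn : 0 < n) : p * Nat.log b (a ^ n) < q * n := by
  refine (Nat.pow_lt_pow_iff_right (by omega : 1 < b)).1 ?_
  calc b ^ (p * Nat.log b (a ^ n)) = (b ^ Nat.log b (a ^ n)) ^ p := by rw [← pow_mul, mul_comm]
    _ ≤ (a ^ n) ^ p := Nat.pow_le_pow_left (Nat.pow_log_le_self b (pow_pos ha n).ne') p
    _ = (a ^ p) ^ n := by rw [← pow_mul, ← pow_mul, mul_comm]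
    _ < (b ^ q) ^ n := Nat.pow_lt_pow_left hpq hn.ne'
    _ = b ^ (q * n) := by rw [← pow_mul, mul_comm]

/-- if `‖2^n‖ = 2n` for all `n ≥ 1`, then `S₃(2^n) > 0.107·n`
for all `n > 0`. -/
theorem stmt2 (h : ∀ n : ℕ, 1 ≤ n → cpx (2 ^ n) = 2 * n) :
    ∀ n : ℕ, 0 < n → ((Nat.digits 3 (2 ^ n)).sum : ℝ) > 0.107 * n := by
  intro n hn
  have hcpx := cpx_le_mul_log_add_digits_sum (b := 3) (by norm_num) (Nat.two_pow_pos n)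
  rw [h n hn] at hcpx
  have hlog : 3000 * Nat.log 3 (2 ^ n) < 1893 * n :=
    mul_log_pow_lt two_pos (by norm_num) (by decide +kernel) hn
  have hcpx' : (2 * n : ℝ) ≤ 3 * Nat.log 3 (2 ^ n) + (Nat.digits 3 (2 ^ n)).sum := by
    exact_mod_cast hcpx
  have hlog' : (3000 * Nat.log 3 (2 ^ n) : ℝ) < 1893 * n := by exact_mod_cast hlog
  linarith
end

section
/- For all integers n > 1, the integer complexity with subtraction satisfies 3·log_3(n) ≤ ‖n‖_− ≤ 6·log_6(n) + 5.890, and in particular ‖n‖_− < 3.679·log_3(n) + 5.890. Moreover, ‖n‖_− = 3·log_3(n) if and only if n is a power of 3. -/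
/-- `IsExprM n m` : the integer `n` is representable by an arithmetic expression
in basis `{1, +, ·, −}` containing exactly `m` ones. -/
inductive IsExprM : ℤ → ℕ → Prop
  | one : IsExprM 1 1
  | add {a b : ℤ} {m n : ℕ} : IsExprM a m → IsExprM b n → IsExprM (a + b) (m + n)
  | mul {a b : ℤ} {m n : ℕ} : IsExprM a m → IsExprM b n → IsExprM (a * b) (m + n)
  | sub {a b : ℤ} {m n : ℕ} : IsExprM a m → IsExprM b n → IsExprM (a - b) (m + n)

/-- Integer complexity `‖n‖₋` in basis `{1, +, ·, −}`. -/
noncomputable def cpxM (n : ℤ) : ℕ := sInf {m | IsExprM n m}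

/-!
An expression with `m` ones has value `a` with `|a| ^ 3 ≤ 3 ^ m`: this is multiplicative for products, and for
sums and differences `x + y ≤ x * y` once `x, y ≥ 2`, the summands `0` and `1` being checked by hand. This gives
the lower bound; equality forces `n ^ 3 = 3 ^ m`, so `n` is a power of `3`, and conversely `3 ^ j` is a product
of `j` threes. For the upper bound write `n = 6 q + r` and use `6q`, `6q + 1`, `2(3q + 1)`, `3(2q + 1)`,
`2(3(q + 1) − 1)`, `6(q + 1) − 1`: each costs at most `6` ones more than `q` or `q + 1`, which is at most
`(n + 2) / 6`.
-/

namespace IsExprM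

variable {a : ℤ} {m : ℕ}

lemma one_le (h : IsExprM a m) : 1 ≤ m := by
  induction h <;> omega

lemma isExprM_cpxM (h : IsExprM a m) : IsExprM a (cpxM a) :=
  Nat.sInf_mem ⟨m, h⟩

end IsExprM

lemma cpxM_le {a : ℤ} {m : ℕ} (h : IsExprM a m) : cpxM a ≤ m :=
  Nat.sInf_le h

lemma isExprM_natCast : ∀ {n : ℕ}, 1 ≤ n → IsExprM n n
  | 1, _ => IsExprM.one
  | n + 2, _ => by
    have h := (isExprM_natCast (n := n + 1) (by omega)).add IsExprM.one
    push_cast at h ⊢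
    rwa [add_assoc] at h

lemma isExprM_two : IsExprM 2 2 := isExprM_natCast (n := 2) (by norm_num)

lemma isExprM_three : IsExprM 3 3 := isExprM_natCast (n := 3) (by norm_num)

lemma isExprM_six : IsExprM 6 5 := isExprM_two.mul isExprM_three

lemma isExprM_three_pow {j : ℕ} (hj : 1 ≤ j) : IsExprM (3 ^ j) (3 * j) := by
  induction j, hj using Nat.le_induction with
  | base => simpa using isExprM_three
  | succ j _ ih => simpa [pow_succ, mul_add] using ih.mul isExprM_three

lemma cpxM_natCast_le {n : ℕ} (hn : 1 ≤ n) : cpxM n ≤ n :=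
  cpxM_le (isExprM_natCast hn)

lemma one_add_pow_three_le {y n : ℕ} (hn : 1 ≤ n) (hy : y ^ 3 ≤ 3 ^ n) :
    (1 + y) ^ 3 ≤ 3 ^ (n + 1) := by
  have h3n : 3 ≤ 3 ^ n := Nat.le_self_pow (by omega) 3
  rw [pow_succ]
  rcases lt_or_ge y 2 with hy2 | hy2
  · interval_cases y <;> omega
  rcases lt_or_ge y 3 with hy3 | hy3
  · obtain rfl : y = 2 := by omega
    -- `8 ≤ 3 ^ n` forces `n ≥ 2`
    have : 9 ≤ 3 ^ n := by
      calc 9 = 3 ^ 2 := by norm_num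
        _ ≤ 3 ^ n := Nat.pow_le_pow_right (by norm_num) (by
          by_contra! h
          interval_cases n
          omega)
    omega
  · have : 3 * y ≤ y * y := Nat.mul_le_mul_right y hy3
    calc (1 + y) ^ 3 ≤ y ^ 3 * 3 := by nlinarith
      _ ≤ 3 ^ n * 3 := by omega

lemma add_pow_three_le {x y m n : ℕ} (hm : 1 ≤ m) (hn : 1 ≤ n)
    (hx : x ^ 3 ≤ 3 ^ m) (hy : y ^ 3 ≤ 3 ^ n) : (x + y) ^ 3 ≤ 3 ^ (m + n) := by
  wlog hxy : x ≤ y generalizing x y m n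
  · rw [add_comm x, add_comm m]
    exact this hn hm hy hx (by omega)
  rcases lt_trichotomy x 1 with hx0 | rfl | hx2
  · obtain rfl : x = 0 := by omega
    calc (0 + y) ^ 3 ≤ 3 ^ n := by simpa using hy
      _ ≤ 3 ^ (m + n) := Nat.pow_le_pow_right (by norm_num) (by omega)
  · calc (1 + y) ^ 3 ≤ 3 ^ (n + 1) := one_add_pow_three_le hn hy
      _ ≤ 3 ^ (m + n) := Nat.pow_le_pow_right (by norm_num) (by omega)
  · calc (x + y) ^ 3 ≤ (x * y) ^ 3 := Nat.pow_le_pow_left (by nlinarith) 3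
      _ = x ^ 3 * y ^ 3 := mul_pow x y 3
      _ ≤ 3 ^ m * 3 ^ n := Nat.mul_le_mul hx hy
      _ = 3 ^ (m + n) := (pow_add 3 m n).symm

lemma IsExprM.natAbs_pow_three_le {a : ℤ} {m : ℕ} (h : IsExprM a m) : a.natAbs ^ 3 ≤ 3 ^ m := by
  induction h with
  | one => norm_num
  | @add a b m n ha hb iha ihb =>
    calc (a + b).natAbs ^ 3 ≤ (a.natAbs + b.natAbs) ^ 3 :=
          Nat.pow_le_pow_left (Int.natAbs_add_le a b) 3
      _ ≤ 3 ^ (m + n) := add_pow_three_le ha.one_le hb.one_le iha ihb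
  | @mul a b m n _ _ iha ihb =>
    rw [Int.natAbs_mul, mul_pow, pow_add]
    exact Nat.mul_le_mul iha ihb
  | @sub a b m n ha hb iha ihb =>
    calc (a - b).natAbs ^ 3 ≤ (a.natAbs + b.natAbs) ^ 3 :=
          Nat.pow_le_pow_left (Int.natAbs_sub_le a b) 3
      _ ≤ 3 ^ (m + n) := add_pow_three_le ha.one_le hb.one_le iha ihb

lemma pow_three_le_three_pow_cpxM {n : ℕ} (hn : 1 ≤ n) : n ^ 3 ≤ 3 ^ cpxM n := by
  simpa using (isExprM_natCast hn).isExprM_cpxM.natAbs_pow_three_le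

lemma cpxM_three_pow {j : ℕ} (hj : 1 ≤ j) : cpxM (3 ^ j) = 3 * j := by
  refine le_antisymm (cpxM_le (isExprM_three_pow hj)) ?_
  have h := pow_three_le_three_pow_cpxM (Nat.one_le_pow j 3 (by norm_num))
  rw [← pow_mul, mul_comm, Nat.pow_le_pow_iff_right (by norm_num)] at h
  exact_mod_cast h

lemma three_mul_logb_le_cpxM {n : ℕ} (hn : 1 ≤ n) : 3 * Real.logb 3 n ≤ cpxM n := by
  have h : ((n : ℝ)) ^ 3 ≤ (3 : ℝ) ^ cpxM n := by exact_mod_cast pow_three_le_three_pow_cpxM hn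
  have hpos : (0 : ℝ) < (n : ℝ) ^ 3 := by positivity
  calc 3 * Real.logb 3 n = Real.logb 3 ((n : ℝ) ^ 3) := by rw [Real.logb_pow]; push_cast; ring
    _ ≤ Real.logb 3 ((3 : ℝ) ^ cpxM n) := Real.logb_le_logb_of_le (by norm_num) hpos h
    _ = cpxM n := by rw [Real.logb_pow, Real.logb_self_eq_one (by norm_num), mul_one]

lemma exists_eq_three_pow_of_cpxM_eq {n : ℕ} (hn : 1 ≤ n)
    (h : (cpxM n : ℝ) = 3 * Real.logb 3 n) : ∃ j : ℕ, n = 3 ^ j := by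
  have hpos : (0 : ℝ) < (n : ℝ) ^ 3 := by positivity
  have hlog : (cpxM n : ℝ) = Real.logb 3 ((n : ℝ) ^ 3) := by rw [h, Real.logb_pow]; push_cast; ring
  have hcube : (n : ℝ) ^ 3 = (3 : ℝ) ^ cpxM n := by
    rw [← Real.rpow_natCast 3 (cpxM n), hlog, Real.rpow_logb (by norm_num) (by norm_num) hpos]
  have hdvd : n ∣ 3 ^ cpxM n := by
    rw [← (by exact_mod_cast hcube : n ^ 3 = 3 ^ cpxM n)]
    exact dvd_pow_self n (by norm_num)
  obtain ⟨j, -, rfl⟩ := (Nat.dvd_prime_pow Nat.prime_three).mp hdvd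
  exact ⟨j, rfl⟩

lemma cpxM_eq_three_mul_logb_iff {n : ℕ} (hn : 1 < n) :
    (cpxM n : ℝ) = 3 * Real.logb 3 n ↔ ∃ j : ℕ, n = 3 ^ j := by
  refine ⟨exists_eq_three_pow_of_cpxM_eq hn.le, ?_⟩
  rintro ⟨j, rfl⟩
  have hj : 1 ≤ j := by
    by_contra! h
    simp_all
  push_cast
  rw [cpxM_three_pow hj, Real.logb_pow, Real.logb_self_eq_one (by norm_num)]
  push_cast
  ring

lemma cpxM_le_of_eq {a b : ℤ} {m : ℕ} (h : IsExprM a m) (hab : b = a) : cpxM b ≤ m :=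
  hab ▸ cpxM_le h

lemma exists_cpxM_le_add_six {n : ℕ} (hn : 12 ≤ n) :
    ∃ k : ℕ, 2 ≤ k ∧ 6 * k ≤ n + 2 ∧ cpxM n ≤ cpxM k + 6 := by
  obtain ⟨q, r, hr, rfl⟩ : ∃ q r, r < 6 ∧ n = 6 * q + r :=
    ⟨n / 6, n % 6, Nat.mod_lt n (by norm_num), (Nat.div_add_mod n 6).symm⟩
  have hq : IsExprM q (cpxM q) := (isExprM_natCast (by omega)).isExprM_cpxM
  have hq' : IsExprM (q + 1) (cpxM (q + 1 : ℕ)) := by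
    exact_mod_cast (isExprM_natCast (n := q + 1) (by omega)).isExprM_cpxM
  interval_cases r
  · exact ⟨q, by omega, by omega,
      (cpxM_le_of_eq (isExprM_six.mul hq) (by push_cast; ring)).trans (by omega)⟩
  · exact ⟨q, by omega, by omega,
      (cpxM_le_of_eq ((isExprM_six.mul hq).add .one) (by push_cast; ring)).trans (by omega)⟩
  · exact ⟨q, by omega, by omega,
      (cpxM_le_of_eq (isExprM_two.mul ((isExprM_three.mul hq).add .one))
        (by push_cast; ring)).trans (by omega)⟩
  · exact ⟨q, by omega, by omega,
      (cpxM_le_of_eq (isExprM_three.mul ((isExprM_two.mul hq).add .one))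
        (by push_cast; ring)).trans (by omega)⟩
  · exact ⟨q + 1, by omega, by omega,
      (cpxM_le_of_eq (isExprM_two.mul ((isExprM_three.mul hq').sub .one))
        (by push_cast; ring)).trans (by omega)⟩
  · exact ⟨q + 1, by omega, by omega,
      (cpxM_le_of_eq ((isExprM_six.mul hq').sub .one) (by push_cast; ring)).trans (by omega)⟩

lemma cpxM_le_of_le_eleven {n : ℕ} (h2 : 2 ≤ n) (h11 : n ≤ 11) :
    (cpxM n : ℝ) ≤ 6 * Real.logb 6 ((n : ℝ) - 2 / 5) + 5.890 := by
  have hn : (2 : ℝ) ≤ n := by exact_mod_cast h2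
  rcases le_or_gt n 6 with h6 | h6
  · have hc : cpxM n ≤ 5 := by
      rcases h6.lt_or_eq with h6 | rfl
      · exact (cpxM_natCast_le (by omega)).trans (by omega)
      · exact cpxM_le_of_eq isExprM_six (by norm_num)
    have : 0 ≤ Real.logb 6 ((n : ℝ) - 2 / 5) := Real.logb_nonneg (by norm_num) (by linarith)
    have : (cpxM n : ℝ) ≤ 5 := by exact_mod_cast hc
    linarith
  · have hn7 : (7 : ℝ) ≤ n := by exact_mod_cast h6
    have : 1 ≤ Real.logb 6 ((n : ℝ) - 2 / 5) := by
      rw [Real.le_logb_iff_rpow_le (by norm_num) (by linarith), Real.rpow_one]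
      linarith
    have : (cpxM n : ℝ) ≤ 11 := by exact_mod_cast (cpxM_natCast_le (by omega)).trans h11
    linarith

-- `2 / 5` is the fixed point of `k ↦ (k + 2) / 6`, so `6 * k ≤ n + 2` gives `6 * (k - 2/5) ≤ n - 2/5`.
lemma cpxM_le_six_mul_logb_sub {n : ℕ} (hn : 2 ≤ n) :
    (cpxM n : ℝ) ≤ 6 * Real.logb 6 ((n : ℝ) - 2 / 5) + 5.890 := by
  induction n using Nat.strong_induction_on with
  | _ n ih =>
  rcases le_or_gt n 11 with h11 | h11
  · exact cpxM_le_of_le_eleven hn h11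
  obtain ⟨k, hk2, hkn, hc⟩ := exists_cpxM_le_add_six h11
  have hk : (2 : ℝ) ≤ k := by exact_mod_cast hk2
  have hkn' : 6 * ((k : ℝ) - 2 / 5) ≤ n - 2 / 5 := by
    have : (6 * k : ℝ) ≤ n + 2 := by exact_mod_cast hkn
    linarith
  calc (cpxM n : ℝ) ≤ cpxM k + 6 := by exact_mod_cast hc
    _ ≤ 6 * Real.logb 6 ((k : ℝ) - 2 / 5) + 5.890 + 6 := by linarith [ih k (by omega) hk2]
    _ = 6 * Real.logb 6 (6 * ((k : ℝ) - 2 / 5)) + 5.890 := by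
      rw [Real.logb_mul (by norm_num) (by linarith), Real.logb_self_eq_one (by norm_num)]
      ring
    _ ≤ 6 * Real.logb 6 ((n : ℝ) - 2 / 5) + 5.890 := by
      gcongr
      · norm_num
      · linarith

-- `380 / 233` lies between `6 / 3.679` and `log 6 / log 3`.
lemma six_mul_logb_six_lt {x : ℝ} (hx : 1 < x) : 6 * Real.logb 6 x < 3.679 * Real.logb 3 x := by
  have h : 380 * Real.log 3 < 233 * Real.log 6 := by
    have : (3 : ℝ) ^ 380 < 6 ^ 233 := by exact_mod_cast (by decide +kernel : (3 : ℕ) ^ 380 < 6 ^ 233)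
    simpa [Real.log_pow] using Real.log_lt_log (by positivity) this
  have hl3 : 0 < Real.log 3 := Real.log_pos (by norm_num)
  have hl6 : 0 < Real.log 6 := Real.log_pos (by norm_num)
  have hlx : 0 < Real.log x := Real.log_pos hx
  rw [Real.logb, Real.logb, ← mul_div_assoc, ← mul_div_assoc, div_lt_div_iff₀ hl6 hl3]
  nlinarith [mul_lt_mul_of_pos_left h hlx]

/-- for all `n > 1`,
`3·log₃ n ≤ ‖n‖₋ ≤ 6·log₆ n + 5.890 < 3.679·log₃ n + 5.890`, and
`‖n‖₋ = 3·log₃ n` iff `n` is a power of `3`. -/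
theorem stmt8 (n : ℕ) (hn : 1 < n) :
    3 * Real.logb 3 n ≤ (cpxM (n : ℤ) : ℝ) ∧
    (cpxM (n : ℤ) : ℝ) ≤ 6 * Real.logb 6 n + 5.890 ∧
    (cpxM (n : ℤ) : ℝ) < 3.679 * Real.logb 3 n + 5.890 ∧
    ((cpxM (n : ℤ) : ℝ) = 3 * Real.logb 3 n ↔ ∃ m : ℕ, n = 3 ^ m) := by
  have hn' : (1 : ℝ) < n := by exact_mod_cast hn
  have hupper : (cpxM n : ℝ) ≤ 6 * Real.logb 6 n + 5.890 := by
    have : Real.logb 6 ((n : ℝ) - 2 / 5) ≤ Real.logb 6 n :=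
      Real.logb_le_logb_of_le (by norm_num) (by linarith) (by linarith)
    linarith [cpxM_le_six_mul_logb_sub hn]
  exact ⟨three_mul_logb_le_cpxM hn.le, hupper,
    hupper.trans_lt (by linarith [six_mul_logb_six_lt hn']), cpxM_eq_three_mul_logb_iff hn⟩
end

section
/- ‖5^6‖ ≤ 29 < 30 = 6·‖5‖; specifically 5^6 = 15625 = 1 + 2^3·3^2·(1 + 2^3·3^3) gives an expression for 5^6 with 29 ones, while ‖5‖ = 5. -/
lemma isExpr_pos {n m : ℕ} (h : IsExpr n m) : 1 ≤ n ∧ 1 ≤ m := by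
  induction h with
  | one => omega
  | add _ _ ih1 ih2 => omega
  | mul _ _ ih1 ih2 =>
      constructor
      · exact Nat.one_le_iff_ne_zero.mpr (Nat.mul_ne_zero (by omega) (by omega))
      · omega

lemma isExpr_cube {n m : ℕ} (h : IsExpr n m) : n ^ 3 ≤ 3 ^ m := by
  induction h with
  | one => norm_num
  | @add a b m n ha hb iha ihb =>
      obtain ⟨ha1, hm1⟩ := isExpr_pos ha
      obtain ⟨hb1, hn1⟩ := isExpr_pos hb
      rw [pow_add]
      have h3m : (3:ℕ) ≤ 3 ^ m := by
        calc (3:ℕ) = 3 ^ 1 := by norm_num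
        _ ≤ 3 ^ m := Nat.pow_le_pow_right (by norm_num) hm1
      have h3n : (3:ℕ) ≤ 3 ^ n := by
        calc (3:ℕ) = 3 ^ 1 := by norm_num
        _ ≤ 3 ^ n := Nat.pow_le_pow_right (by norm_num) hn1
      rcases Nat.lt_or_ge a 2 with ha2 | ha2
      · -- a = 1
        have haa : a = 1 := by omega
        subst haa
        rcases Nat.lt_or_ge b 3 with hb3 | hb3
        · interval_cases b
          · -- b = 1 : 8 ≤ 3^m * 3^n
            nlinarith
          · -- b = 2 : 8 ≤ 3^n so n ≥ 2
            have hn2 : 2 ≤ n := by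
              by_contra hc
              have : n = 1 := by omega
              subst this
              norm_num at ihb
            have h9 : (9:ℕ) ≤ 3 ^ n := by
              calc (9:ℕ) = 3 ^ 2 := by norm_num
              _ ≤ 3 ^ n := Nat.pow_le_pow_right (by norm_num) hn2
            nlinarith
        · -- b ≥ 3 : (1+b)^3 ≤ 3 b^3 ≤ 3 * 3^n ≤ 3^m * 3^n
          have k1 : 3 * b ≤ b ^ 2 := by nlinarith
          have k2 : 3 * b ^ 2 ≤ b ^ 3 := by nlinarith
          have key : (1 + b) ^ 3 ≤ 3 * b ^ 3 := by nlinarith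
          calc (1 + b) ^ 3 ≤ 3 * b ^ 3 := key
          _ ≤ 3 * 3 ^ n := by nlinarith
          _ ≤ 3 ^ m * 3 ^ n := Nat.mul_le_mul_right _ h3m
      · rcases Nat.lt_or_ge b 2 with hb2 | hb2
        · -- b = 1, a ≥ 2 (symmetric)
          have hbb : b = 1 := by omega
          subst hbb
          rcases Nat.lt_or_ge a 3 with ha3 | ha3
          · interval_cases a
            have hm2 : 2 ≤ m := by
              by_contra hc
              have : m = 1 := by omega
              subst this
              norm_num at iha
            have h9 : (9:ℕ) ≤ 3 ^ m := by
              calc (9:ℕ) = 3 ^ 2 := by norm_num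
              _ ≤ 3 ^ m := Nat.pow_le_pow_right (by norm_num) hm2
            nlinarith
          · have k1 : 3 * a ≤ a ^ 2 := by nlinarith
            have k2 : 3 * a ^ 2 ≤ a ^ 3 := by nlinarith
            have key : (a + 1) ^ 3 ≤ 3 * a ^ 3 := by nlinarith
            calc (a + 1) ^ 3 ≤ 3 * a ^ 3 := key
            _ ≤ 3 * 3 ^ m := by nlinarith
            _ ≤ 3 ^ m * 3 ^ n := by nlinarith
        · -- a, b ≥ 2 : a + b ≤ a * b
          have hab : a + b ≤ a * b := by nlinarith
          calc (a + b) ^ 3 ≤ (a * b) ^ 3 := Nat.pow_le_pow_left hab 3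
          _ = a ^ 3 * b ^ 3 := by ring
          _ ≤ 3 ^ m * 3 ^ n := Nat.mul_le_mul iha ihb
  | @mul a b m n ha hb iha ihb =>
      rw [pow_add]
      calc (a * b) ^ 3 = a ^ 3 * b ^ 3 := by ring
      _ ≤ 3 ^ m * 3 ^ n := Nat.mul_le_mul iha ihb

lemma isExpr_two : IsExpr 2 2 := IsExpr.add .one .one
lemma isExpr_three : IsExpr 3 3 := IsExpr.add isExpr_two .one
lemma isExpr_five : IsExpr 5 5 := IsExpr.add isExpr_two isExpr_three

lemma isExpr_15625 : IsExpr 15625 29 := by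
  have h8 : IsExpr 8 6 := IsExpr.mul isExpr_two (IsExpr.mul isExpr_two isExpr_two)
  have h27 : IsExpr 27 9 := IsExpr.mul isExpr_three (IsExpr.mul isExpr_three isExpr_three)
  have h216 : IsExpr 216 15 := IsExpr.mul h8 h27
  have h217 : IsExpr 217 16 := IsExpr.add .one h216
  have h9 : IsExpr 9 6 := IsExpr.mul isExpr_three isExpr_three
  have h72 : IsExpr 72 12 := IsExpr.mul h8 h9
  have h15624 : IsExpr 15624 28 := IsExpr.mul h72 h217
  exact IsExpr.add .one h15624

/-- `‖5^6‖ ≤ 29 < 30 = 6·‖5‖`, with `‖5‖ = 5`. -/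
theorem stmt11 : cpx 5 = 5 ∧ cpx (5 ^ 6) ≤ 29 ∧ 29 < 6 * cpx 5 := by
  have h5 : cpx 5 = 5 := by
    apply le_antisymm
    · exact Nat.sInf_le isExpr_five
    · apply le_csInf ⟨5, isExpr_five⟩
      intro b hb
      have hc : (5:ℕ) ^ 3 ≤ 3 ^ b := isExpr_cube hb
      by_contra hlt
      have hb4 : b ≤ 4 := by omega
      have : (3:ℕ) ^ b ≤ 3 ^ 4 := Nat.pow_le_pow_right (by norm_num) hb4
      norm_num at hc this
      omega
  refine ⟨h5, ?_, by omega⟩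
  have : (5:ℕ) ^ 6 = 15625 := by norm_num
  rw [this]
  exact Nat.sInf_le isExpr_15625
end

section
/- Let P be a finite set of primes with minimum element q and let Q ∈ P maximize ‖Q‖/log_3(Q). Then for all n > 1, the P-algorithm logarithmic complexity satisfies ‖n‖_P / log_3(n) ≤ ‖Q‖/log_3(Q) + (q−1)/log_3(q). -/
/-- `PAlg P n c` : the `P`-algorithm, run on the positive integer `n`, builds an
expression for `n` in basis `{1, +, ·}` containing `c` ones.  The algorithm
represents `1` as `1`; represents `p ∈ P` by a shortest expression (of `cpx p`
ones); if `n ∉ P` is divisible by some `p ∈ P` it writes `n = p · (n / p)` and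
recurses on `n / p`; otherwise it writes `n = 1 + (n - 1)` and recurses on `n - 1`. -/
inductive PAlg (P : Finset ℕ) : ℕ → ℕ → Prop
  | one : PAlg P 1 1
  | base {p : ℕ} : p ∈ P → PAlg P p (cpx p)
  | div {n p c : ℕ} : 1 < n → n ∉ P → p ∈ P → p ∣ n →
      PAlg P (n / p) c → PAlg P n (cpx p + c)
  | step {n c : ℕ} : 1 < n → (∀ p ∈ P, ¬ p ∣ n) →
      PAlg P (n - 1) c → PAlg P n (c + 1)

/-- `‖n‖_P` : the number of ones in the expression built by the `P`-algorithm. -/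
noncomputable def cpxP (P : Finset ℕ) (n : ℕ) : ℕ := sInf {c | PAlg P n c}

open Real

lemma Nat.sub_one_mod_add_one {n q : ℕ} (h : ¬ q ∣ n) : (n - 1) % q + 1 = n % q := by
  have hn : n ≠ 0 := by rintro rfl; exact h (dvd_zero q)
  rcases q.eq_zero_or_pos with rfl | hq
  · simp only [Nat.mod_zero]; omega
  have hlt : (n - 1) % q + 1 < q := by
    refine lt_of_le_of_ne (Nat.mod_lt _ hq) fun heq ↦ h ⟨(n - 1) / q + 1, ?_⟩
    have := Nat.div_add_mod (n - 1) q
    rw [mul_add]; omega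
  rw [← Nat.mod_eq_of_lt hlt, Nat.mod_add_mod, Nat.sub_add_cancel (by omega)]

lemma IsExpr.lt_two_pow {a m : ℕ} (h : IsExpr a m) : a < 2 ^ m := by
  induction h with
  | one => norm_num
  | add _ _ iha ihb => rw [pow_add]; nlinarith
  | mul _ _ iha ihb => rw [pow_add]; nlinarith

lemma isExpr_self_s14 {n : ℕ} (hn : 1 ≤ n) : IsExpr n n := by
  induction n, hn using Nat.le_induction with
  | base => exact IsExpr.one
  | succ n _ ih => exact IsExpr.add ih IsExpr.one

lemma isExpr_cpx {n : ℕ} (hn : 1 ≤ n) : IsExpr n (cpx n) :=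
  Nat.sInf_mem ⟨n, isExpr_self_s14 hn⟩

lemma logb_le_cpx_mul_logb_two {n : ℕ} (hn : 1 ≤ n) : logb 3 n ≤ cpx n * logb 3 2 := by
  calc logb 3 n ≤ logb 3 ((2 : ℝ) ^ cpx n) :=
        logb_le_logb_of_le (by norm_num) (by exact_mod_cast hn)
          (by exact_mod_cast (isExpr_cpx hn).lt_two_pow.le)
    _ = cpx n * logb 3 2 := logb_pow 3 2 (cpx n)

lemma sub_one_mul_log_le {x y : ℝ} (hx : 1 ≤ x) (hxy : x ≤ y) :
    (x - 1) * log y ≤ (y - 1) * log x := by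
  have hx0 : 0 < x := by linarith
  have hy0 : 0 < y := by linarith
  have hlog_div : log y - log x ≤ y / x - 1 := by
    rw [← log_div hy0.ne' hx0.ne']
    exact log_le_sub_one_of_pos (div_pos hy0 hx0)
  have hlog_x : 1 - x⁻¹ ≤ log x := one_sub_inv_le_log_of_pos hx0
  have hident : (x - 1) * (y / x - 1) = (y - x) * (1 - x⁻¹) := by field_simp
  nlinarith [mul_le_mul_of_nonneg_left hlog_div (by linarith : 0 ≤ x - 1),
    mul_le_mul_of_nonneg_left hlog_x (by linarith : 0 ≤ y - x)]

lemma sub_one_mul_logb_le {x y : ℝ} (hx : 1 ≤ x) (hxy : x ≤ y) :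
    (x - 1) * logb 3 y ≤ (y - 1) * logb 3 x := by
  simp only [logb, mul_div_assoc']
  exact div_le_div_of_nonneg_right (sub_one_mul_log_le hx hxy) (log_nonneg (by norm_num))

section PAlgorithm

variable {P : Finset ℕ}

lemma PAlg.exists_of_one_le (hP : ∀ p ∈ P, 1 < p) {n : ℕ} (hn : 1 ≤ n) : ∃ c, PAlg P n c := by
  induction n using Nat.strong_induction_on with
  | _ n ih =>
    obtain rfl | h1 := hn.eq_or_lt
    · exact ⟨1, PAlg.one⟩
    by_cases hnP : n ∈ P
    · exact ⟨cpx n, PAlg.base hnP⟩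
    by_cases hdiv : ∃ p ∈ P, p ∣ n
    · obtain ⟨p, hp, hpn⟩ := hdiv
      have hp1 := hP p hp
      obtain ⟨c, hc⟩ := ih (n / p) (Nat.div_lt_self (by omega) hp1)
        (Nat.div_pos (Nat.le_of_dvd (by omega) hpn) (by omega))
      exact ⟨_, PAlg.div h1 hnP hp hpn hc⟩
    · simp only [not_exists, not_and] at hdiv
      obtain ⟨c, hc⟩ := ih (n - 1) (by omega) (by omega)
      exact ⟨c + 1, PAlg.step h1 hdiv hc⟩

lemma palg_cpxP (hP : ∀ p ∈ P, 1 < p) {n : ℕ} (hn : 1 ≤ n) : PAlg P n (cpxP P n) :=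
  Nat.sInf_mem (PAlg.exists_of_one_le hP hn)

lemma cpxP_le_of_palg {n c : ℕ} (h : PAlg P n c) : cpxP P n ≤ c :=
  Nat.sInf_le h

lemma PAlg.self_of_lt {q : ℕ} (hqmin : ∀ p ∈ P, q ≤ p) {n : ℕ} (hn : 1 ≤ n) (hnq : n < q) :
    PAlg P n n := by
  induction n, hn using Nat.le_induction with
  | base => exact PAlg.one
  | succ n hn ih =>
    have hndvd : ∀ p ∈ P, ¬ p ∣ n + 1 := fun p hp hdvd ↦
      absurd (Nat.le_of_dvd (by omega) hdvd) (by have := hqmin p hp; omega)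
    exact PAlg.step (by omega) hndvd (ih (by omega))

lemma cpxP_le_cpx_add_cpxP_div (hP : ∀ p ∈ P, 1 < p) {n p : ℕ} (hn : 1 < n) (hnP : n ∉ P)
    (hp : p ∈ P) (hpn : p ∣ n) : cpxP P n ≤ cpx p + cpxP P (n / p) :=
  cpxP_le_of_palg <| PAlg.div hn hnP hp hpn <|
    palg_cpxP hP (Nat.div_pos (Nat.le_of_dvd (by omega) hpn) (hP p hp).le)

lemma cpxP_le_cpxP_sub_one_add_one (hP : ∀ p ∈ P, 1 < p) {n : ℕ} (hn : 1 < n)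
    (hndvd : ∀ p ∈ P, ¬ p ∣ n) : cpxP P n ≤ cpxP P (n - 1) + 1 :=
  cpxP_le_of_palg <| PAlg.step hn hndvd <| palg_cpxP hP (by omega)

end PAlgorithm

section Bound

variable {P : Finset ℕ} {q : ℕ} {A B : ℝ}

lemma one_le_mul_logb_two (hA : ∀ p ∈ P, (cpx p : ℝ) ≤ A * logb 3 p) {p : ℕ} (hp : p ∈ P)
    (hp1 : 1 < p) : 1 ≤ A * logb 3 2 := by
  have hlogp : 0 < logb 3 p := logb_pos (by norm_num) (by exact_mod_cast hp1)
  have := logb_le_cpx_mul_logb_two hp1.le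
  have := hA p hp
  nlinarith [logb_pos (b := 3) (x := 2) (by norm_num) (by norm_num)]

lemma cpxP_add_mul_logb_le_of_dvd (hP : ∀ p ∈ P, 1 < p)
    (hA : ∀ p ∈ P, (cpx p : ℝ) ≤ A * logb 3 p) (hB : 0 ≤ B) {n p : ℕ} (hn : 1 < n)
    (hp : p ∈ P) (hpn : p ∣ n)
    (ih : 1 < n / p → (cpxP P (n / p) : ℝ) ≤ (A + B) * logb 3 (n / p : ℕ)) :
    cpxP P n + B * logb 3 p ≤ (A + B) * logb 3 n := by
  have hp1 := hP p hp
  by_cases hnP : n ∈ P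
  · have hpn_log : logb 3 p ≤ logb 3 n := logb_le_logb_of_le (by norm_num) (by positivity)
      (by exact_mod_cast Nat.le_of_dvd (by omega) hpn)
    have : (cpxP P n : ℝ) ≤ cpx n := by exact_mod_cast cpxP_le_of_palg (PAlg.base hnP)
    nlinarith [hA n hnP]
  · have hquot : 1 < n / p := by
      by_contra h
      have : n / p = 1 := by
        have := Nat.div_pos (Nat.le_of_dvd (by omega) hpn) (by omega : 0 < p)
        omega
      exact hnP (by rwa [Nat.eq_mul_of_div_eq_right hpn this, mul_one])
    have hsplit : logb 3 n = logb 3 p + logb 3 (n / p : ℕ) := by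
      rw [← logb_mul (by positivity) (by positivity), ← Nat.cast_mul, Nat.mul_div_cancel' hpn]
    have : (cpxP P n : ℝ) ≤ cpx p + cpxP P (n / p) := by
      exact_mod_cast cpxP_le_cpx_add_cpxP_div hP (by omega) hnP hp hpn
    rw [hsplit]
    linear_combination this + hA p hp + ih hquot

lemma cpxP_le_mul_logb_of_lt (hqmin : ∀ p ∈ P, q ≤ p) (hA2 : 1 ≤ A * logb 3 2) (hA : 0 ≤ A)
    (hB : B * logb 3 q = q - 1) {n : ℕ} (hn : 1 < n) (hnq : n < q) :
    (cpxP P n : ℝ) ≤ (A + B) * logb 3 n := by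
  have hlogq : 0 < logb 3 q := logb_pos (by norm_num) (by exact_mod_cast hn.trans hnq)
  have hlog2n : logb 3 2 ≤ logb 3 n :=
    logb_le_logb_of_le (by norm_num) (by norm_num) (by exact_mod_cast hn)
  have hsub : ((n : ℝ) - 1) * logb 3 q ≤ B * logb 3 q * logb 3 n := by
    rw [hB]; exact sub_one_mul_logb_le (by exact_mod_cast hn.le) (by exact_mod_cast hnq.le)
  have : (cpxP P n : ℝ) ≤ n := by exact_mod_cast cpxP_le_of_palg (PAlg.self_of_lt hqmin hn.le hnq)
  have : (n : ℝ) - 1 ≤ B * logb 3 n := by nlinarith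
  nlinarith

/-- The second conjunct is the induction invariant: `n % q` subtractions lead from `n` to a
multiple of `q`, and `q - 1 - n % q` is what is left of the credit of the last division. -/
lemma cpxP_le_mul_logb (hP : ∀ p ∈ P, 1 < p) (hq : q ∈ P) (hqmin : ∀ p ∈ P, q ≤ p)
    (hA : ∀ p ∈ P, (cpx p : ℝ) ≤ A * logb 3 p) (hB : B * logb 3 q = q - 1) {n : ℕ} (hn : 1 < n) :
    (cpxP P n : ℝ) ≤ (A + B) * logb 3 n ∧
      (q ≤ n → (cpxP P n : ℝ) + (q - 1) ≤ (A + B) * logb 3 n + (n % q : ℕ)) := by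
  have hq1 := hP q hq
  have hlogq : 0 < logb 3 q := logb_pos (by norm_num) (by exact_mod_cast hq1)
  have hq1' : (1 : ℝ) < q := by exact_mod_cast hq1
  have hB0 : 0 ≤ B := by nlinarith
  have hA0 : 0 ≤ A := by
    nlinarith [one_le_mul_logb_two hA hq hq1,
      logb_pos (b := 3) (x := 2) (by norm_num) (by norm_num)]
  have hB_logb : ∀ p ∈ P, (q : ℝ) - 1 ≤ B * logb 3 p := fun p hp ↦ hB ▸
    mul_le_mul_of_nonneg_left (logb_le_logb_of_le (by norm_num) (by positivity)
      (by exact_mod_cast hqmin p hp)) hB0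
  induction n using Nat.strong_induction_on with
  | _ n ih =>
  by_cases hdiv : ∃ p ∈ P, p ∣ n
  · obtain ⟨p, hp, hpn⟩ := hdiv
    have := cpxP_add_mul_logb_le_of_dvd hP hA hB0 hn hp hpn
      fun h ↦ (ih (n / p) (Nat.div_lt_self (by omega) (hP p hp)) h).1
    have := hB_logb p hp
    exact ⟨by linarith, fun _ ↦ by linarith [Nat.cast_nonneg (α := ℝ) (n % q)]⟩
  simp only [not_exists, not_and] at hdiv
  rcases lt_or_ge n q with hnq | hqn
  · exact ⟨cpxP_le_mul_logb_of_lt hqmin (one_le_mul_logb_two hA hq hq1) hA0 hB hn hnq,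
      fun h ↦ absurd h (not_le.2 hnq)⟩
  have hnq : q < n := lt_of_le_of_ne hqn fun h ↦ hdiv q hq (h ▸ dvd_rfl)
  have hprev := (ih (n - 1) (by omega) (by omega)).2 (by omega)
  have hstep : (cpxP P n : ℝ) ≤ cpxP P (n - 1) + 1 := by
    exact_mod_cast cpxP_le_cpxP_sub_one_add_one hP hn hdiv
  have hmod : ((n - 1) % q : ℕ) + 1 = ((n % q : ℕ) : ℝ) := by
    exact_mod_cast Nat.sub_one_mod_add_one (hdiv q hq)
  have hmod_lt : ((n % q : ℕ) : ℝ) + 1 ≤ q := by exact_mod_cast Nat.mod_lt n (by omega)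
  have hlog : (A + B) * logb 3 (n - 1 : ℕ) ≤ (A + B) * logb 3 n :=
    mul_le_mul_of_nonneg_left (logb_le_logb_of_le (by norm_num)
      (by exact_mod_cast (by omega : 0 < n - 1)) (by exact_mod_cast Nat.sub_le n 1)) (by linarith)
  exact ⟨by linarith, fun _ ↦ by linarith⟩

end Bound

theorem stmt14_general (P : Finset ℕ) (hprime : ∀ p ∈ P, p.Prime)
    (q : ℕ) (hq : q ∈ P) (hqmin : ∀ p ∈ P, q ≤ p)
    (Q : ℕ)
    (hQmax : ∀ p ∈ P, (cpx p : ℝ) / Real.logb 3 p ≤ (cpx Q : ℝ) / Real.logb 3 Q) :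
    ∀ n : ℕ, 1 < n →
      (cpxP P n : ℝ) / Real.logb 3 n ≤
        (cpx Q : ℝ) / Real.logb 3 Q + ((q : ℝ) - 1) / Real.logb 3 q := by
  intro n hn
  have hP : ∀ p ∈ P, 1 < p := fun p hp ↦ (hprime p hp).one_lt
  have hlogb_pos : ∀ {m : ℕ}, 1 < m → 0 < logb 3 m := fun hm ↦
    logb_pos (by norm_num) (by exact_mod_cast hm)
  have hA : ∀ p ∈ P, (cpx p : ℝ) ≤ cpx Q / logb 3 Q * logb 3 p := fun p hp ↦
    (div_le_iff₀ (hlogb_pos (hP p hp))).1 (hQmax p hp)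
  have hB : ((q : ℝ) - 1) / logb 3 q * logb 3 q = q - 1 :=
    div_mul_cancel₀ _ (hlogb_pos (hP q hq)).ne'
  rw [div_le_iff₀ (hlogb_pos hn)]
  exact (cpxP_le_mul_logb hP hq hqmin hA hB hn).1

/-- let `q` be the minimum of `P` and `Q ∈ P` have maximal
logarithmic complexity; then `‖n‖_P/log₃ n ≤ ‖Q‖/log₃ Q + (q−1)/log₃ q`
for all `n > 1`. -/
theorem stmt14 (P : Finset ℕ) (hP : P.Nonempty) (hprime : ∀ p ∈ P, p.Prime)
    (q : ℕ) (hq : q ∈ P) (hqmin : ∀ p ∈ P, q ≤ p)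
    (Q : ℕ) (hQ : Q ∈ P)
    (hQmax : ∀ p ∈ P, (cpx p : ℝ) / Real.logb 3 p ≤ (cpx Q : ℝ) / Real.logb 3 Q) :
    ∀ n : ℕ, 1 < n →
      (cpxP P n : ℝ) / Real.logb 3 n ≤
        (cpx Q : ℝ) / Real.logb 3 Q + ((q : ℝ) - 1) / Real.logb 3 q :=
  stmt14_general P hprime q hq hqmin Q hQmax
end

section
/- Let P be a finite set of primes, p ∈ P with minimal ‖p‖/log_3(p). For every ε > 0, there exist only finitely many n with ‖n‖_P/log_3(n) < ‖p‖/log_3(p) − ε. -/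
/-!
Put `α = ‖p‖ / log p`. Minimality of `p` says `α · log q ≤ ‖q‖` for every `q ∈ P`, so a division
step of the `P`-algorithm never lowers the defect `c - α · log n`, and once `n - 1 ≥ α` neither does
a subtraction step, since `α · (log n - log (n - 1)) ≤ α / (n - 1) ≤ 1`. Hence the defect of
`‖n‖_P` is bounded below by a constant, whereas `‖n‖_P / log₃ n < ‖p‖ / log₃ p - ε` forces it below
`-ε · log₃ n`.
-/

open Real

lemma mul_log_le_mul_log_sub_one_add_one {α x : ℝ} (hα : 0 ≤ α) (hx : 1 < x) (hαx : α ≤ x - 1) :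
    α * log x ≤ α * log (x - 1) + 1 := by
  have hx1 : 0 < x - 1 := by linarith
  have hlog : log x - log (x - 1) ≤ 1 / (x - 1) := by
    have := log_le_sub_one_of_pos (div_pos (by linarith) hx1)
    rw [log_div (by linarith) hx1.ne'] at this
    calc log x - log (x - 1) ≤ x / (x - 1) - 1 := this
      _ = 1 / (x - 1) := by field_simp; ring
  have : α * (1 / (x - 1)) ≤ 1 := by rw [mul_one_div, div_le_one hx1]; exact hαx
  nlinarith [mul_le_mul_of_nonneg_left hlog hα]

lemma finite_setOf_div_log_lt {f : ℕ → ℝ} {α K ε : ℝ} (hε : 0 < ε)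
    (hf : ∀ n : ℕ, 1 < n → α * log n ≤ f n + K) :
    {n : ℕ | 1 < n ∧ f n / log n < α - ε}.Finite := by
  refine (Set.finite_lt_nat ⌈exp (K / ε)⌉₊).subset fun n ⟨hn, hlt⟩ => ?_
  have hn' : (1 : ℝ) < n := by exact_mod_cast hn
  have hlogn : 0 < log n := log_pos hn'
  have hfn : f n < (α - ε) * log n := (div_lt_iff₀ hlogn).mp hlt
  have hlogn_lt : log n < K / ε := by
    rw [lt_div_iff₀ hε]; nlinarith [hf n hn]
  have : (n : ℝ) < exp (K / ε) := (log_lt_iff_lt_exp (by linarith)).mp hlogn_lt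
  exact_mod_cast this.trans_le (Nat.le_ceil _)

namespace PAlg

variable {P : Finset ℕ}

lemma exists_of_one_lt (hP : ∀ q ∈ P, 1 < q) {n : ℕ} (hn : 1 ≤ n) : ∃ c, PAlg P n c := by
  induction n using Nat.strong_induction_on with
  | _ n ih =>
    obtain rfl | hn1 := hn.eq_or_lt
    · exact ⟨1, one⟩
    by_cases hnP : n ∈ P
    · exact ⟨cpx n, base hnP⟩
    by_cases hdvd : ∃ q ∈ P, q ∣ n
    · obtain ⟨q, hq, hqn⟩ := hdvd
      obtain ⟨c, hc⟩ := ih (n / q) (Nat.div_lt_self (by omega) (hP q hq))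
        (Nat.div_pos (Nat.le_of_dvd (by omega) hqn) (Nat.zero_lt_of_lt (hP q hq)))
      exact ⟨cpx q + c, div hn1 hnP hq hqn hc⟩
    · push Not at hdvd
      obtain ⟨c, hc⟩ := ih (n - 1) (by omega) (by omega)
      exact ⟨c + 1, step hn1 hdvd hc⟩

lemma cpxP_spec (hP : ∀ q ∈ P, 1 < q) {n : ℕ} (hn : 1 ≤ n) : PAlg P n (cpxP P n) :=
  Nat.sInf_mem (exists_of_one_lt hP hn)

lemma mul_log_le {α : ℝ} (hα : 0 ≤ α) (hP : ∀ q ∈ P, α * log q ≤ cpx q) {n c : ℕ}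
    (h : PAlg P n c) : α * log n ≤ c + α * log (α + 1) := by
  have hK : 0 ≤ α * log (α + 1) := mul_nonneg hα (log_nonneg (by linarith))
  induction h with
  | one => simp only [Nat.cast_one, log_one, mul_zero]; linarith
  | base hq => linarith [hP _ hq]
  | @div n q c hn _ hq hqn _ ih =>
    have hq0 : q ≠ 0 := (Nat.pos_of_dvd_of_pos hqn (by omega)).ne'
    have hnq : (n : ℝ) = q * (n / q : ℕ) := by exact_mod_cast (Nat.mul_div_cancel' hqn).symm
    have hnq0 : n / q ≠ 0 := (Nat.div_pos (Nat.le_of_dvd (by omega) hqn) (by omega)).ne'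
    rw [hnq, log_mul (by exact_mod_cast hq0) (by exact_mod_cast hnq0)]
    push_cast
    linarith [hP _ hq]
  | @step n c hn _ _ ih =>
    have hn' : ((n - 1 : ℕ) : ℝ) = n - 1 := by rw [Nat.cast_sub hn.le, Nat.cast_one]
    rw [hn'] at ih
    push_cast
    by_cases hsmall : (n : ℝ) ≤ α + 1
    · have : log n ≤ log (α + 1) := log_le_log (by positivity) hsmall
      nlinarith [mul_le_mul_of_nonneg_left this hα]
    · have := mul_log_le_mul_log_sub_one_add_one (x := n) hα (by exact_mod_cast hn) (by linarith)
      linarith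

end PAlg

lemma div_logb_eq_log_mul_div (c b x : ℝ) : c / logb b x = log b * (c / log x) := by
  rw [logb, div_div_eq_mul_div]
  ring

theorem stmt16_general (P : Finset ℕ) (hprime : ∀ r ∈ P, r.Prime)
    (p : ℕ) (hp : p ∈ P)
    (hmin : ∀ r ∈ P, (cpx p : ℝ) / Real.logb 3 p ≤ (cpx r : ℝ) / Real.logb 3 r)
    (ε : ℝ) (hε : 0 < ε) :
    {n : ℕ | 1 < n ∧
      (cpxP P n : ℝ) / Real.logb 3 n < (cpx p : ℝ) / Real.logb 3 p - ε}.Finite := by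
  have hP : ∀ q ∈ P, 1 < q := fun q hq => (hprime q hq).one_lt
  have hlog_pos : ∀ q ∈ P, 0 < log q := fun q hq => log_pos (by exact_mod_cast hP q hq)
  have hlog3 : 0 < log 3 := log_pos (by norm_num)
  set α : ℝ := cpx p / log p
  have hα : 0 ≤ α := div_nonneg (Nat.cast_nonneg _) (hlog_pos p hp).le
  have hαP : ∀ q ∈ P, α * log q ≤ cpx q := fun q hq => by
    have := hmin q hq
    rw [div_logb_eq_log_mul_div, div_logb_eq_log_mul_div, mul_le_mul_iff_right₀ hlog3] at this
    exact (le_div_iff₀ (hlog_pos q hq)).mp this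
  refine (finite_setOf_div_log_lt (div_pos hε hlog3) (K := α * log (α + 1))
    fun n hn => (PAlg.cpxP_spec hP hn.le).mul_log_le hα hαP).subset fun n ⟨hn, hlt⟩ => ⟨hn, ?_⟩
  rw [div_logb_eq_log_mul_div, div_logb_eq_log_mul_div] at hlt
  refine lt_of_mul_lt_mul_left ?_ hlog3.le
  rwa [mul_sub, mul_div_cancel₀ _ hlog3.ne']

/-- if `p ∈ P` has minimal logarithmic complexity among `P`, then
for every `ε > 0` there are only finitely many `n` with
`‖n‖_P/log₃ n < ‖p‖/log₃ p − ε`. -/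
theorem stmt16 (P : Finset ℕ) (hP : P.Nonempty) (hprime : ∀ r ∈ P, r.Prime)
    (p : ℕ) (hp : p ∈ P)
    (hmin : ∀ r ∈ P, (cpx p : ℝ) / Real.logb 3 p ≤ (cpx r : ℝ) / Real.logb 3 r)
    (ε : ℝ) (hε : 0 < ε) :
    {n : ℕ | 1 < n ∧
      (cpxP P n : ℝ) / Real.logb 3 n < (cpx p : ℝ) / Real.logb 3 p - ε}.Finite :=
  stmt16_general P hprime p hp hmin ε hε
end
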